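/- Let X be a diffeological space. The map τ_X : 𝔓ᵤ(X) → 𝔓ᵤ(𝔓ᵤ(X)) sending a subset A ⊆ X to its induced subspace topology τ_X(A) = {A ∩ O : O ⊆ X is D-open}, and the map θ : 𝔓ᵤ(𝔓ᵤ(X)) → 𝔓ᵤ(X) sending a collection 𝒞 of subsets of X to its union ⋃𝒞, are both smooth, and θ ∘ τ_X = id. In particular, τ_X is a smooth injection with a smooth left inverse. -/

import Mathlib

open Set Function

universe u

/-- A diffeology on a set `X`, encoded via total functions on `Fin n → ℝ`
together with a designated open domain `U`. -/
structure Diffeology' (X : Type u) where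
  IsPlot : (n : ℕ) → Set (Fin n → ℝ) → ((Fin n → ℝ) → X) → Prop
  isOpen_of_isPlot : ∀ {n : ℕ} {U : Set (Fin n → ℝ)} {P : (Fin n → ℝ) → X},
    IsPlot n U P → IsOpen U
  const_isPlot : ∀ (n : ℕ) (U : Set (Fin n → ℝ)), IsOpen U → ∀ x : X,
    IsPlot n U (fun _ => x)
  locality : ∀ {n : ℕ} {U : Set (Fin n → ℝ)} {P : (Fin n → ℝ) → X}, IsOpen U →
    (∀ r ∈ U, ∃ V, IsOpen V ∧ r ∈ V ∧ V ⊆ U ∧ IsPlot n V P) → IsPlot n U P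
  smooth_comp : ∀ {n m : ℕ} {U : Set (Fin n → ℝ)} {P : (Fin n → ℝ) → X}
    {V : Set (Fin m → ℝ)} {F : (Fin m → ℝ) → (Fin n → ℝ)},
    IsPlot n U P → IsOpen V → ContDiffOn ℝ (⊤ : ℕ∞) F V → Set.MapsTo F V U →
    IsPlot m V (P ∘ F)
  plot_congr : ∀ {n : ℕ} {U : Set (Fin n → ℝ)} {P Q : (Fin n → ℝ) → X},
    IsPlot n U P → Set.EqOn P Q U → IsPlot n U Q

/-- The UPD property: `P : U → 𝔓(X)` admits local implicit plots through every point of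
every value, where plots of `X` are given by the predicate `Pl`. This characterizes the
plots of the union power set diffeology. -/
def UPDProp {X : Type u} (Pl : (n : ℕ) → Set (Fin n → ℝ) → ((Fin n → ℝ) → X) → Prop)
    (n : ℕ) (U : Set (Fin n → ℝ)) (P : (Fin n → ℝ) → Set X) : Prop :=
  IsOpen U ∧ ∀ r₀ ∈ U, ∀ x₀ ∈ P r₀,
    ∃ (V : Set (Fin n → ℝ)) (σ : (Fin n → ℝ) → X),
      IsOpen V ∧ r₀ ∈ V ∧ V ⊆ U ∧ Pl n V σ ∧ σ r₀ = x₀ ∧ ∀ r ∈ V, σ r ∈ P r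

/-- The D-topology: a set is D-open iff its preimage by every plot is open. -/
def DOpen {X : Type u} (D : Diffeology' X) (O : Set X) : Prop :=
  ∀ (n : ℕ) (U : Set (Fin n → ℝ)) (P : (Fin n → ℝ) → X),
    D.IsPlot n U P → IsOpen {r ∈ U | P r ∈ O}

section

variable {X : Type u}

theorem Diffeology'.isPlot_of_subset (D : Diffeology' X) {n : ℕ} {U V : Set (Fin n → ℝ)}
    {σ : (Fin n → ℝ) → X} (hσ : D.IsPlot n U σ) (hV : IsOpen V) (hVU : V ⊆ U) :
    D.IsPlot n V σ :=
  D.smooth_comp hσ hV contDiffOn_id hVU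

theorem dOpen_univ (D : Diffeology' X) : DOpen D univ := by
  intro n U P hP
  simpa using D.isOpen_of_isPlot hP

/-- `τ_X A`, the D-topology of `X` induced on `A`. -/
def subspaceDTopology (D : Diffeology' X) (A : Set X) : Set (Set X) :=
  {B | ∃ O : Set X, DOpen D O ∧ B = A ∩ O}

theorem sUnion_subspaceDTopology (D : Diffeology' X) (A : Set X) :
    ⋃₀ subspaceDTopology D A = A := by
  refine Subset.antisymm ?_ fun x hx => ⟨A, ⟨univ, dOpen_univ D, (inter_univ A).symm⟩, hx⟩
  rintro x ⟨_, ⟨O, -, rfl⟩, hx⟩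
  exact hx.1

namespace UPDProp

/-- The implicit plot through a point of `P r₁ ∩ O` is restricted to the open set where it
lands in `O`. -/
theorem inter_dOpen {D : Diffeology' X} {n : ℕ} {U : Set (Fin n → ℝ)}
    {P : (Fin n → ℝ) → Set X} {O : Set X} (hP : UPDProp D.IsPlot n U P) (hO : DOpen D O) :
    UPDProp D.IsPlot n U fun r => P r ∩ O := by
  refine ⟨hP.1, ?_⟩
  rintro r₁ hr₁ x₀ ⟨hx₀P, hx₀O⟩
  obtain ⟨V, σ, -, hr₁V, hVU, hσ, hσr₁, hσP⟩ := hP.2 r₁ hr₁ x₀ hx₀P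
  have hW : IsOpen {r ∈ V | σ r ∈ O} := hO n V σ hσ
  exact ⟨{r ∈ V | σ r ∈ O}, σ, hW, ⟨hr₁V, hσr₁ ▸ hx₀O⟩, fun r hr => hVU hr.1,
    D.isPlot_of_subset hσ hW fun r hr => hr.1, hσr₁, fun r hr => ⟨hσP r hr.1, hr.2⟩⟩

/-- The member `P r₀ ∩ O` of `τ_X (P r₀)` lies on the global plot `r ↦ P r ∩ O`. -/
theorem subspaceDTopology {D : Diffeology' X} {n : ℕ} {U : Set (Fin n → ℝ)}
    {P : (Fin n → ℝ) → Set X} (hP : UPDProp D.IsPlot n U P) :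
    UPDProp (UPDProp D.IsPlot) n U fun r => subspaceDTopology D (P r) := by
  refine ⟨hP.1, ?_⟩
  rintro r₀ hr₀ _ ⟨O, hO, rfl⟩
  exact ⟨U, fun r => P r ∩ O, hP.1, hr₀, subset_rfl, hP.inter_dOpen hO, rfl,
    fun _ _ => ⟨O, hO, rfl⟩⟩

/-- For `x₀ ∈ B₀ ∈ Pi r₀`, an implicit plot through `x₀` of the implicit plot through `B₀`
is the required plot. -/
theorem sUnion {Pl : (n : ℕ) → Set (Fin n → ℝ) → ((Fin n → ℝ) → X) → Prop} {n : ℕ}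
    {U : Set (Fin n → ℝ)} {Pi : (Fin n → ℝ) → Set (Set X)} (hPi : UPDProp (UPDProp Pl) n U Pi) :
    UPDProp Pl n U fun r => ⋃₀ Pi r := by
  refine ⟨hPi.1, ?_⟩
  rintro r₀ hr₀ x₀ ⟨B₀, hB₀, hx₀⟩
  obtain ⟨V, S, -, hr₀V, hVU, hS, rfl, hSPi⟩ := hPi.2 r₀ hr₀ B₀ hB₀
  obtain ⟨W, σ, hW, hr₀W, hWV, hσ, hσr₀, hσS⟩ := hS.2 r₀ hr₀V x₀ hx₀
  exact ⟨W, σ, hW, hr₀W, hWV.trans hVU, hσ, hσr₀,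
    fun r hr => ⟨S r, hSPi r (hWV hr), hσS r hr⟩⟩

end UPDProp

end

/-- the map `τ_X : 𝔓ᵤ(X) → 𝔓ᵤ²(X)` sending `A` to its subspace
D-topology `{A ∩ O : O D-open}` and the union map `θ : 𝔓ᵤ²(X) → 𝔓ᵤ(X)`, `𝒞 ↦ ⋃𝒞`,
are both smooth, with `θ ∘ τ_X = id`; in particular `τ_X` is a smooth injection with a
smooth left inverse. -/
theorem tau_and_union_smooth {X : Type u} (D : Diffeology' X) :
    (∀ (n : ℕ) (U : Set (Fin n → ℝ)) (P : (Fin n → ℝ) → Set X),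
      UPDProp D.IsPlot n U P →
      UPDProp (UPDProp D.IsPlot) n U
        (fun r => {B : Set X | ∃ O : Set X, DOpen D O ∧ B = P r ∩ O})) ∧
    (∀ (n : ℕ) (U : Set (Fin n → ℝ)) (Pi : (Fin n → ℝ) → Set (Set X)),
      UPDProp (UPDProp D.IsPlot) n U Pi →
      UPDProp D.IsPlot n U (fun r => ⋃₀ (Pi r))) ∧
    (∀ A : Set X, ⋃₀ {B : Set X | ∃ O : Set X, DOpen D O ∧ B = A ∩ O} = A) ∧
    Function.Injective
      (fun A : Set X => {B : Set X | ∃ O : Set X, DOpen D O ∧ B = A ∩ O}) :=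
  have hLeftInv : LeftInverse sUnion (subspaceDTopology D) := sUnion_subspaceDTopology D
  ⟨fun _ _ _ hP => hP.subspaceDTopology, fun _ _ _ hPi => hPi.sUnion, hLeftInv,
    hLeftInv.injective⟩
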